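/- Consider the generalized Krum setup with parameter p ≥ 2 and deterministic updates G_1,…,G_n ∈ ℝ^d (good updates V_1,…,V_{n−f}, Byzantine updates B_1,…,B_f). Suppose the score-minimizing index i* corresponds to a Byzantine worker, i.e., U = B_k for some k ∈ [f]. Then for every good worker i: Σ_{j∈N_g(k)} ‖B_k − V_j‖₂² ≤ d^{1 − 2/p} · (Σ_{j∈N_g(i)} ‖V_i − V_j‖_p² + Σ_{l∈N_b(i)} ‖V_i − B_l‖_p²). -/
import Mathlib


open Finset

/-- The `r`-(quasi)norm on `ℝ^d`: `‖x‖_r = (Σ_k |x_k|^r)^{1/r}`. -/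
noncomputable def pnorm {d : ℕ} (r : ℝ) (x : EuclideanSpace ℝ (Fin d)) : ℝ :=
  (∑ k, |x k| ^ r) ^ (1 / r)

lemma pnorm_nonneg {d : ℕ} (r : ℝ) (x : EuclideanSpace ℝ (Fin d)) : 0 ≤ pnorm r x := by
  unfold pnorm
  apply Real.rpow_nonneg
  exact Finset.sum_nonneg fun k _ => Real.rpow_nonneg (abs_nonneg _) _

lemma key_norm_le {d : ℕ} (p : ℝ) (hp : 2 ≤ p) (x : EuclideanSpace ℝ (Fin d)) :
    ‖x‖ ^ 2 ≤ (d : ℝ) ^ (1 - 2 / p) * pnorm p x ^ 2 := by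
  have hp0 : 0 < p := lt_of_lt_of_le two_pos hp
  have hS : (0:ℝ) ≤ ∑ k, |x k| ^ p :=
    Finset.sum_nonneg fun k _ => Real.rpow_nonneg (abs_nonneg _) _
  have hpn2 : pnorm p x ^ 2 = (∑ k, |x k| ^ p) ^ (2 / p) := by
    unfold pnorm
    rw [← Real.rpow_natCast ((∑ k, |x k| ^ p) ^ (1/p)) 2, ← Real.rpow_mul hS]
    norm_num
    ring_nf
  have hnorm : ‖x‖ ^ 2 = ∑ k, |x k| ^ 2 := by
    rw [EuclideanSpace.norm_eq, Real.sq_sqrt (Finset.sum_nonneg fun k _ => sq_nonneg _)]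
    simp [sq_abs, Real.norm_eq_abs]
  rcases Nat.eq_zero_or_pos d with hd | hd
  · subst hd
    simp [hnorm, hpn2]
    positivity
  · have hdR : (0:ℝ) < d := by exact_mod_cast hd
    -- Jensen: ((1/d) Σ |x_k|²)^{p/2} ≤ (1/d) Σ |x_k|^p
    have jensen := Real.rpow_arith_mean_le_arith_mean_rpow Finset.univ
        (fun _ : Fin d => 1 / (d : ℝ)) (fun k => |x k| ^ 2)
        (fun _ _ => by positivity)
        (by simp [Finset.sum_const]; field_simp)
        (fun k _ => sq_nonneg _) (p := p / 2) (by linarith)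
    have hz : ∀ k : Fin d, (|x k| ^ 2) ^ (p / 2) = |x k| ^ p := by
      intro k
      rw [← Real.rpow_natCast (|x k|) 2, ← Real.rpow_mul (abs_nonneg _)]
      norm_num
      congr 1
      ring
    simp only [hz] at jensen
    rw [← Finset.mul_sum, ← Finset.mul_sum, Real.mul_rpow (by positivity)
      (Finset.sum_nonneg fun k _ => sq_nonneg _)] at jensen
    -- jensen : (1/d)^(p/2) * (Σ|x|²)^(p/2) ≤ (1/d) * Σ|x|^p
    have h2p : (0:ℝ) < 2 / p := by positivity
    have := Real.rpow_le_rpow (by positivity) jensen (le_of_lt h2p)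
    rw [Real.mul_rpow (by positivity) (by positivity),
      ← Real.rpow_mul (by positivity), ← Real.rpow_mul
        (Finset.sum_nonneg fun k _ => sq_nonneg _),
      div_mul_div_comm, mul_comm p 2, div_self (by positivity),
      Real.mul_rpow (by positivity) hS] at this
    simp only [Real.rpow_one] at this
    -- this : (1/d) * Σ|x|² ≤ (1/d)^(2/p) * (Σ|x|^p)^(2/p)
    rw [hnorm, hpn2]
    have hd1 : ((1:ℝ)/d) ^ ((2:ℝ)/p) = (d:ℝ) ^ (-(2/p)) := by
      rw [one_div, ← Real.rpow_neg_one, ← Real.rpow_mul (le_of_lt hdR)]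
      norm_num
    rw [hd1] at this
    calc ∑ k, |x k| ^ 2 = (d:ℝ) * ((1/d) * ∑ k, |x k| ^ 2) := by field_simp
      _ ≤ (d:ℝ) * ((d:ℝ) ^ (-(2/p)) * (∑ k, |x k| ^ p) ^ ((2:ℝ)/p)) := by
          exact mul_le_mul_of_nonneg_left this (le_of_lt hdR)
      _ = (d:ℝ) ^ (1 - 2/p) * (∑ k, |x k| ^ p) ^ ((2:ℝ)/p) := by
          have : (1:ℝ) - 2/p = 1 + -(2/p) := by ring
          rw [this, Real.rpow_add hdR, Real.rpow_one]
          ring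

/-- in the generalized Krum setup with `p ≥ 2` and deterministic updates,
if the score-minimizing worker `i*` is Byzantine, then for every good worker `i`,
`Σ_{j ∈ N_g(i*)} ‖G i* - G j‖₂² ≤ d^{1-2/p} (Σ_{j ∈ N_g(i)} ‖G i - G j‖_p²
  + Σ_{l ∈ N_b(i)} ‖G i - G l‖_p²)`. -/
theorem krum_byzantine_selected_bound_p_ge_two {n f d : ℕ} (hn : 2 * f + 2 < n)
    (p : ℝ) (hp : 2 ≤ p)
    (G : Fin n → EuclideanSpace ℝ (Fin d))
    (Good : Finset (Fin n)) (hGood : Good.card = n - f)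
    (N : Fin n → Finset (Fin n))
    (hNself : ∀ i, i ∉ N i)
    (hNcard : ∀ i, (N i).card = n - f - 2)
    (hNclosest : ∀ i, ∀ j ∈ N i, ∀ l, l ∉ N i → l ≠ i →
      pnorm p (G i - G j) ≤ pnorm p (G i - G l))
    (istar : Fin n)
    (hmin : ∀ i, ∑ j ∈ N istar, pnorm p (G istar - G j) ^ 2 ≤
      ∑ j ∈ N i, pnorm p (G i - G j) ^ 2)
    (hbyz : istar ∉ Good) :
    ∀ i ∈ Good,
      ∑ j ∈ N istar ∩ Good, ‖G istar - G j‖ ^ 2 ≤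
        (d : ℝ) ^ (1 - 2 / p) *
          (∑ j ∈ N i ∩ Good, pnorm p (G i - G j) ^ 2 +
            ∑ l ∈ N i \ Good, pnorm p (G i - G l) ^ 2) := by
  intro i hi
  have h1 : ∑ j ∈ N istar ∩ Good, ‖G istar - G j‖ ^ 2 ≤
      (d:ℝ) ^ (1 - 2/p) * ∑ j ∈ N istar ∩ Good, pnorm p (G istar - G j) ^ 2 := by
    rw [Finset.mul_sum]
    exact Finset.sum_le_sum fun j _ => key_norm_le p hp _
  have h2 : ∑ j ∈ N istar ∩ Good, pnorm p (G istar - G j) ^ 2 ≤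
      ∑ j ∈ N istar, pnorm p (G istar - G j) ^ 2 :=
    Finset.sum_le_sum_of_subset_of_nonneg Finset.inter_subset_left
      (fun j _ _ => sq_nonneg _)
  have h4 : ∑ j ∈ N i ∩ Good, pnorm p (G i - G j) ^ 2 +
      ∑ l ∈ N i \ Good, pnorm p (G i - G l) ^ 2 = ∑ j ∈ N i, pnorm p (G i - G j) ^ 2 := by
    rw [add_comm, ← Finset.sdiff_inter_self_left (N i) Good]
    exact Finset.sum_sdiff Finset.inter_subset_left
  have hdnn : (0:ℝ) ≤ (d:ℝ) ^ (1 - 2/p) := Real.rpow_nonneg (Nat.cast_nonneg d) _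
  calc ∑ j ∈ N istar ∩ Good, ‖G istar - G j‖ ^ 2
      ≤ (d:ℝ) ^ (1 - 2/p) * ∑ j ∈ N istar ∩ Good, pnorm p (G istar - G j) ^ 2 := h1
    _ ≤ (d:ℝ) ^ (1 - 2/p) * ∑ j ∈ N istar, pnorm p (G istar - G j) ^ 2 :=
        mul_le_mul_of_nonneg_left h2 hdnn
    _ ≤ (d:ℝ) ^ (1 - 2/p) * ∑ j ∈ N i, pnorm p (G i - G j) ^ 2 :=
        mul_le_mul_of_nonneg_left (hmin i) hdnn
    _ = _ := by rw [h4]
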